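/- For every prime p > 3, ∑_{k=1}^{p-1} k H_k² ≡ −(5/4) p + 1 (mod p²), as rationals with denominators coprime to p. -/

import Mathlib

/-!
An induction gives the closed form
`∑_{k ≤ n} k H_k² = n(n+1)/2 · H_n² + (1 + n - n²)/2 · H_n + (n² - 3n)/4`,
so at `n = p - 1` the claim reduces to Wolstenholme's theorem `H_{p-1} ≡ 0 (mod p²)`.
For the latter, pairing `k` with `p - k` gives `2 H_{p-1} = p ∑ 1/(k(p-k)) ≡ -p ∑ 1/k² (mod p²)`,
and `∑ 1/k² ≡ ∑ k^(p-3) ≡ 0 (mod p)` by Fermat's little theorem and the vanishing of power sums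
over `(ℤ/p)ˣ`. Congruences between `p`-integral rationals are read as bounds on `p`-adic norms.
-/

open Finset

/-- Harmonic number `H n = ∑_{j=1}^n 1/j`. -/
def H (n : ℕ) : ℚ := ∑ j ∈ Finset.Icc 1 n, (1 : ℚ) / j

/-- Generalized harmonic number `H_n^{(α)} = ∑_{i=1}^n 1/i^α`. -/
def Hgen (n α : ℕ) : ℚ := ∑ i ∈ Finset.Icc 1 n, (1 : ℚ) / (i : ℚ) ^ α

/-- `S m = ∑_{r=0}^m C(m+1,r) B_r B_{m-r}`. -/
def S (m : ℕ) : ℚ := ∑ r ∈ Finset.range (m + 1),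
  ((m + 1).choose r : ℚ) * bernoulli r * bernoulli (m - r)

open scoped Padic

theorem ZMod.sum_Ico_pow_eq_zero {p : ℕ} [Fact p.Prime] {l : ℕ} (hl : ¬ (p - 1) ∣ l) :
    ∑ k ∈ Ico 1 p, (k : ZMod p) ^ l = 0 := by
  have hunits : ∑ k ∈ Ico 1 p, (k : ZMod p) ^ l = ∑ u : (ZMod p)ˣ, (u : ZMod p) ^ l := by
    refine sum_bij' (fun k hk => Units.mk0 (k : ZMod p) ?_) (fun u _ => (u : ZMod p).val)
      (fun _ _ => mem_univ _) (fun u _ => ?_) (fun k hk => ?_) (fun u _ => ?_) (fun _ _ => rfl)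
    · rw [Ne, ZMod.natCast_eq_zero_iff]
      exact Nat.not_dvd_of_pos_of_lt (mem_Ico.1 hk).1 (mem_Ico.1 hk).2
    · exact mem_Ico.2 ⟨Nat.pos_of_ne_zero ((ZMod.val_ne_zero _).2 u.ne_zero), ZMod.val_lt _⟩
    · simp [ZMod.val_cast_of_lt (mem_Ico.1 hk).2]
    · ext; simp
  rw [hunits, FiniteField.sum_pow_units, ZMod.card, if_neg hl]

section PairedSums

variable {K : Type*} [Field K] [CharZero K]

theorem two_mul_sum_Ico_inv (p : ℕ) :
    2 * ∑ k ∈ Ico 1 p, (k : K)⁻¹ = p * ∑ k ∈ Ico 1 p, ((k : K) * (p - k : ℕ))⁻¹ := by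
  have hreflect : ∑ k ∈ Ico 1 p, ((p - k : ℕ) : K)⁻¹ = ∑ k ∈ Ico 1 p, (k : K)⁻¹ := by
    simpa using sum_Ico_reflect (fun k => (k : K)⁻¹) 1 (Nat.le_succ p) (n := p)
  rw [two_mul]
  nth_rw 2 [← hreflect]
  rw [← sum_add_distrib, mul_sum]
  refine sum_congr rfl fun k hk => ?_
  obtain ⟨hk, hkp⟩ := mem_Ico.1 hk
  have hk0 : (k : K) ≠ 0 := Nat.cast_ne_zero.2 (by omega)
  have hpk0 : ((p - k : ℕ) : K) ≠ 0 := Nat.cast_ne_zero.2 (by omega)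
  field_simp
  rw [Nat.cast_sub hkp.le]
  ring

theorem sum_Ico_inv_mul_add_sum_Ico_inv_sq (p : ℕ) :
    ∑ k ∈ Ico 1 p, ((k : K) * (p - k : ℕ))⁻¹ + ∑ k ∈ Ico 1 p, ((k : K) ^ 2)⁻¹
      = p * ∑ k ∈ Ico 1 p, ((k : K) ^ 2 * (p - k : ℕ))⁻¹ := by
  rw [← sum_add_distrib, mul_sum]
  refine sum_congr rfl fun k hk => ?_
  obtain ⟨hk, hkp⟩ := mem_Ico.1 hk
  have hk0 : (k : K) ≠ 0 := Nat.cast_ne_zero.2 (by omega)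
  have hpk0 : ((p - k : ℕ) : K) ≠ 0 := Nat.cast_ne_zero.2 (by omega)
  field_simp
  rw [Nat.cast_sub hkp.le]
  ring

end PairedSums

namespace Padic

variable {p : ℕ} [Fact p.Prime]

theorem norm_natCast_eq_one_of_pos_of_lt {k : ℕ} (hk : 0 < k) (hkp : k < p) :
    ‖(k : ℚ_[p])‖ = 1 :=
  norm_natCast_eq_one_iff.2 (Nat.coprime_of_lt_prime hk.ne' hkp Fact.out)

theorem pow_dvd_num_of_norm_le {x : ℚ} {n : ℕ} (h : ‖(x : ℚ_[p])‖ ≤ (p : ℝ) ^ (-n : ℤ)) :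
    (p : ℤ) ^ n ∣ x.num := by
  have hden : ‖((x.den : ℤ) : ℚ_[p])‖ ≤ 1 := norm_int_le_one _
  have hnum : ‖(x.num : ℚ_[p])‖ ≤ (p : ℝ) ^ (-n : ℤ) :=
    calc ‖(x.num : ℚ_[p])‖ = ‖(x : ℚ_[p])‖ * ‖((x.den : ℤ) : ℚ_[p])‖ := by
          rw [← norm_mul]; congr 1; exact_mod_cast x.mul_den_eq_num.symm
      _ ≤ (p : ℝ) ^ (-n : ℤ) * 1 := by gcongr
      _ = _ := mul_one _
  exact_mod_cast (norm_int_le_pow_iff_dvd _ n).1 hnum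

theorem exists_eq_pow_mul_of_norm_le {x : ℚ_[p]} {n : ℕ} (h : ‖x‖ ≤ (p : ℝ) ^ (-n : ℤ)) :
    ∃ w : ℤ_[p], x = (p : ℚ_[p]) ^ n * w := by
  have hp : (p : ℚ_[p]) ^ n ≠ 0 := pow_ne_zero _ (Nat.cast_ne_zero.2 (Fact.out : p.Prime).ne_zero)
  refine ⟨⟨x / (p : ℚ_[p]) ^ n, ?_⟩, by simp [mul_div_cancel₀ _ hp]⟩
  rw [norm_div, norm_p_pow, div_le_one (zpow_pos (by exact_mod_cast (Fact.out : p.Prime).pos) _)]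
  exact h

theorem norm_intCast_le_inv_of_dvd {z : ℤ} (h : (p : ℤ) ∣ z) : ‖(z : ℚ_[p])‖ ≤ (p : ℝ)⁻¹ := by
  simpa using (norm_int_le_pow_iff_dvd z 1).2 (by simpa using h)

theorem norm_inv_pow_sub_pow_le {k : ℕ} (hk : 0 < k) (hkp : k < p) (m : ℕ) :
    ‖((k : ℚ_[p]) ^ m)⁻¹ - (k : ℚ_[p]) ^ ((p - 2) * m)‖ ≤ (p : ℝ)⁻¹ := by
  have hk0 : (k : ℚ_[p]) ≠ 0 := Nat.cast_ne_zero.2 hk.ne'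
  have hcop : IsCoprime (k : ℤ) p :=
    Nat.isCoprime_iff_coprime.2 (Nat.coprime_of_lt_prime hk.ne' hkp Fact.out).symm
  have hfermat : (p : ℤ) ∣ 1 - ((k : ℤ) ^ (p - 1)) ^ m := by
    simpa using ((Int.ModEq.pow_card_sub_one_eq_one Fact.out hcop).pow m).dvd
  have hsplit : ((k : ℚ_[p]) ^ m)⁻¹ - (k : ℚ_[p]) ^ ((p - 2) * m)
      = ((k : ℚ_[p]) ^ m)⁻¹ * (((1 - ((k : ℤ) ^ (p - 1)) ^ m : ℤ)) : ℚ_[p]) := by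
    have hexp : (p - 1) * m = m + (p - 2) * m := by
      rw [← one_add_mul]; congr 1; have := (Fact.out : p.Prime).two_le; omega
    push_cast
    rw [← pow_mul, hexp, pow_add, mul_sub, mul_one, inv_mul_cancel_left₀ (pow_ne_zero _ hk0)]
  rw [hsplit, norm_mul, norm_inv, norm_pow, norm_natCast_eq_one_of_pos_of_lt hk hkp, one_pow,
    inv_one, one_mul]
  exact norm_intCast_le_inv_of_dvd hfermat

theorem norm_sum_inv_pow_le {m : ℕ} (hm : ¬ (p - 1) ∣ m) :
    ‖∑ k ∈ Ico 1 p, ((k : ℚ_[p]) ^ m)⁻¹‖ ≤ (p : ℝ)⁻¹ := by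
  have hm' : ¬ (p - 1) ∣ (p - 2) * m := by
    intro h
    have hsum : (p - 2) * m + m = (p - 1) * m := by
      rw [← add_one_mul]; congr 1; have := (Fact.out : p.Prime).two_le; omega
    exact hm ((Nat.dvd_add_right h).1 (hsum ▸ dvd_mul_right _ _))
  have hpow : ‖∑ k ∈ Ico 1 p, (k : ℚ_[p]) ^ ((p - 2) * m)‖ ≤ (p : ℝ)⁻¹ := by
    have hdvd : (p : ℤ) ∣ ∑ k ∈ Ico 1 p, (k : ℤ) ^ ((p - 2) * m) := by
      rw [← ZMod.intCast_zmod_eq_zero_iff_dvd]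
      push_cast
      exact ZMod.sum_Ico_pow_eq_zero hm'
    exact_mod_cast norm_intCast_le_inv_of_dvd hdvd
  have hdiff : ‖∑ k ∈ Ico 1 p, (((k : ℚ_[p]) ^ m)⁻¹ - (k : ℚ_[p]) ^ ((p - 2) * m))‖
      ≤ (p : ℝ)⁻¹ :=
    IsUltrametricDist.norm_sum_le_of_forall_le_of_nonneg (by positivity) fun k hk =>
      norm_inv_pow_sub_pow_le (mem_Ico.1 hk).1 (mem_Ico.1 hk).2 m
  rw [sum_sub_distrib] at hdiff
  simpa using (IsUltrametricDist.norm_add_le_max _ _).trans (max_le hdiff hpow)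

theorem wolstenholme (hp3 : 3 < p) :
    ‖∑ k ∈ Ico 1 p, (k : ℚ_[p])⁻¹‖ ≤ (p : ℝ) ^ (-2 : ℤ) := by
  have hunit : ∀ k ∈ Ico 1 p, ‖(k : ℚ_[p])‖ = 1 ∧ ‖((p - k : ℕ) : ℚ_[p])‖ = 1 := fun k hk =>
    ⟨norm_natCast_eq_one_of_pos_of_lt (mem_Ico.1 hk).1 (mem_Ico.1 hk).2,
      norm_natCast_eq_one_of_pos_of_lt (by grind) (by grind)⟩
  set Q := ∑ k ∈ Ico 1 p, ((k : ℚ_[p]) * (p - k : ℕ))⁻¹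
  set B := ∑ k ∈ Ico 1 p, ((k : ℚ_[p]) ^ 2)⁻¹
  have hQB : ‖Q + B‖ ≤ (p : ℝ)⁻¹ := by
    rw [sum_Ico_inv_mul_add_sum_Ico_inv_sq, norm_mul, norm_p]
    refine mul_le_of_le_one_right (by positivity) <|
      IsUltrametricDist.norm_sum_le_of_forall_le_of_nonneg zero_le_one fun k hk => ?_
    simp [(hunit k hk).1, (hunit k hk).2]
  have hB : ‖B‖ ≤ (p : ℝ)⁻¹ := norm_sum_inv_pow_le fun h => by
    have := Nat.le_of_dvd two_pos h
    omega
  have hQ : ‖Q‖ ≤ (p : ℝ)⁻¹ := by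
    simpa using (IsUltrametricDist.norm_add_le_max (Q + B) (-B)).trans
      (max_le hQB (by rwa [norm_neg]))
  have h2 : ‖(2 : ℚ_[p])‖ = 1 := by
    exact_mod_cast norm_natCast_eq_one_of_pos_of_lt (p := p) two_pos (by omega)
  calc ‖∑ k ∈ Ico 1 p, (k : ℚ_[p])⁻¹‖ = ‖(2 : ℚ_[p]) * ∑ k ∈ Ico 1 p, (k : ℚ_[p])⁻¹‖ := by
        rw [norm_mul, h2, one_mul]
    _ = (p : ℝ)⁻¹ * ‖Q‖ := by rw [two_mul_sum_Ico_inv, norm_mul, norm_p]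
    _ ≤ (p : ℝ)⁻¹ * (p : ℝ)⁻¹ := by gcongr
    _ = (p : ℝ) ^ (-2 : ℤ) := by rw [zpow_neg, zpow_ofNat, sq, mul_inv]

end Padic

theorem H_succ (n : ℕ) : H (n + 1) = H n + 1 / (n + 1 : ℚ) := by
  rw [H, H, sum_Icc_succ_top (by omega : 1 ≤ n + 1)]
  push_cast
  ring

theorem sum_Icc_mul_H_sq (n : ℕ) :
    ∑ k ∈ Icc 1 n, (k : ℚ) * H k ^ 2 =
      (n * (n + 1) / 2) * H n ^ 2 + ((-n ^ 2 + n + 1) / 2) * H n + (n ^ 2 - 3 * n) / 4 := by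
  induction n with
  | zero => simp [H]
  | succ n ih =>
    rw [sum_Icc_succ_top (by omega : 1 ≤ n + 1), ih, H_succ]
    have hn : (n : ℚ) + 1 ≠ 0 := by positivity
    push_cast
    field_simp
    ring

theorem stmt13 (p : ℕ) (hp : p.Prime) (hp3 : 3 < p) :
    (p : ℤ) ^ 2 ∣ ((∑ k ∈ Finset.Icc 1 (p - 1), (k : ℚ) * H k ^ 2)
      - (-(5 / 4) * (p : ℚ) + 1)).num := by
  have := Fact.mk hp
  obtain ⟨w, hw⟩ : ∃ w : ℤ_[p], (H (p - 1) : ℚ_[p]) = (p : ℚ_[p]) ^ 2 * w := by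
    refine Padic.exists_eq_pow_mul_of_norm_le ?_
    have hIco : Ico 1 p = Icc 1 (p - 1) := by ext; simp; omega
    simpa [H, hIco] using Padic.wolstenholme hp3
  have h4 : ‖(4 : ℚ_[p])‖ = 1 := by
    have h2 : ‖((2 : ℕ) : ℚ_[p])‖ = 1 := Padic.norm_natCast_eq_one_of_pos_of_lt two_pos (by omega)
    rw [show (4 : ℚ_[p]) = (2 : ℕ) ^ 2 by norm_num, norm_pow, h2, one_pow]
  have hE : (((∑ k ∈ Icc 1 (p - 1), (k : ℚ) * H k ^ 2) - (-(5 / 4) * (p : ℚ) + 1) : ℚ) : ℚ_[p])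
      = (p : ℚ_[p]) ^ 2 * (2 * (p - 1) * p ^ 3 * w ^ 2 + 2 * (3 * p - p ^ 2 - 1) * w + 1) / 4 := by
    rw [sum_Icc_mul_H_sq]
    push_cast [Nat.cast_sub hp.one_le]
    rw [hw]
    ring
  have hc : ((2 * (p - 1) * p ^ 3 * w ^ 2 + 2 * (3 * p - p ^ 2 - 1) * w + 1 : ℤ_[p]) : ℚ_[p])
      = 2 * (p - 1) * p ^ 3 * w ^ 2 + 2 * (3 * p - p ^ 2 - 1) * w + 1 := by
    norm_cast
  apply Padic.pow_dvd_num_of_norm_le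
  rw [hE, ← hc, norm_div, norm_mul, h4, div_one, Padic.norm_p_pow]
  exact mul_le_of_le_one_right (by positivity) (PadicInt.norm_le_one _)
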